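/- Every finite binary matroid of rank r whose ground set has at most r + 2 elements is regular; that is, it admits a representation over every field. -/

import Mathlib

/-- `ρ` is a representation of the matroid `M` over the field `K`. -/
def Matroid.IsRep {α : Type*} (M : Matroid α) (K : Type*) [Field K] {V : Type*}
    [AddCommGroup V] [Module K V] (ρ : α → V) : Prop :=
  (∀ S ⊆ M.E, (M.Indep S ↔ Set.InjOn ρ S ∧ LinearIndependent K ((↑) : (ρ '' S) → V))) ∧
    Submodule.span K (ρ '' M.E) = ⊤

/-- `M` is representable over the field `K`. -/
def Matroid.RepresentableOver {α : Type*} (M : Matroid α) (K : Type) [Field K] : Prop :=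
  ∃ (V : Type) (_ : AddCommGroup V) (_ : Module K V) (ρ : α → V), M.IsRep K ρ

/-- A matroid is binary if it admits a representation over `𝔽₂ = ZMod 2`. -/
def Matroid.IsBinary {α : Type*} (M : Matroid α) : Prop :=
  M.RepresentableOver (ZMod 2)

/-- A matroid is regular if it admits a representation over every field. -/
def Matroid.IsRegular {α : Type*} (M : Matroid α) : Prop :=
  ∀ (K : Type) [Field K], M.RepresentableOver K

/-!
Choose coordinates in which the base `B` is the standard basis of `𝔽₂^B`. Quotienting by the
basis vectors indexed by `S ∩ B` shows that a set `S` is independent iff the at most two columns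
indexed by `S \ B`, restricted to the coordinates `B \ S`, are independent. Two 0/1 vectors are
linearly independent over a field iff both are nonzero and they are distinct, so the same 0/1
matrix read in any field `K` represents the matroid over `K`.
-/

open Set Submodule

namespace Matroid

variable {α : Type*} {M : Matroid α} {B : Set α} {K : Type*} [Field K] {V W : Type*}
  [AddCommGroup V] [Module K V] [AddCommGroup W] [Module K W] {ρ : α → V}

theorem isRep_iff : M.IsRep K ρ ↔
    (∀ S ⊆ M.E, M.Indep S ↔ LinearIndepOn K ρ S) ∧ span K (ρ '' M.E) = ⊤ :=
  and_congr_left' <| forall₂_congr fun _ _ ↦ iff_congr Iff.rfl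
    ⟨fun ⟨hinj, hli⟩ ↦ (linearIndepOn_iff_image hinj).2 hli,
      fun h ↦ ⟨h.injOn, (linearIndepOn_iff_image h.injOn).1 h⟩⟩

theorem IsRep.comp_linearEquiv (h : M.IsRep K ρ) (L : V ≃ₗ[K] W) : M.IsRep K (L ∘ ρ) := by
  rw [isRep_iff] at h ⊢
  refine ⟨fun S hS ↦ (h.1 S hS).trans ?_, ?_⟩
  · exact (L.toLinearMap.linearIndepOn_iff_of_injOn L.injective.injOn).symm
  · rw [image_comp, span_image_linearEquiv, h.2, Submodule.map_top, LinearEquiv.range]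

theorem IsRep.span_image_eq_top_of_isBase (h : M.IsRep K ρ) (hB : M.IsBase B) :
    span K (ρ '' B) = ⊤ := by
  rw [isRep_iff] at h
  have hBli : LinearIndepOn K ρ B := (h.1 B hB.subset_ground).1 hB.indep
  refine eq_top_iff.2 (h.2 ▸ span_le.2 ?_)
  rintro _ ⟨x, hxE, rfl⟩
  by_cases hxB : x ∈ B
  · exact subset_span (mem_image_of_mem ρ hxB)
  · have hdep := (hB.insert_dep ⟨hxE, hxB⟩).not_indep
    rw [h.1 _ (insert_subset hxE hB.subset_ground), linearIndepOn_insert hxB] at hdep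
    by_contra hx
    exact hdep ⟨hBli, hx⟩

theorem IsRep.exists_isRep_basisFun [Finite B] (h : M.IsRep K ρ) (hB : M.IsBase B) :
    ∃ c : α → B → K, M.IsRep K c ∧ ∀ b : B, c b = Pi.basisFun K B b := by
  classical
  have hBli : LinearIndepOn K ρ B := ((isRep_iff.1 h).1 B hB.subset_ground).1 hB.indep
  let β := Module.Basis.mk hBli (by rw [← image_eq_range, h.span_image_eq_top_of_isBase hB])
  refine ⟨_, h.comp_linearEquiv β.equivFun, fun b ↦ ?_⟩
  have hb : ρ b = β b := (Module.Basis.mk_apply hBli _ b).symm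
  ext j
  simp [hb, Pi.single_apply, eq_comm]

end Matroid

section Coordinates

theorem linearIndepOn_mkQ_ker_comp_iff {R M N ι : Type*} [Ring R] [AddCommGroup M] [Module R M]
    [AddCommGroup N] [Module R N] (g : M →ₗ[R] N) {f : ι → M} {s : Set ι} :
    LinearIndepOn R (mkQ (LinearMap.ker g) ∘ f) s ↔ LinearIndepOn R (g ∘ f) s :=
  (((LinearMap.ker g).liftQ g le_rfl).linearIndepOn_iff_of_injOn
    (LinearMap.ker_eq_bot.1 (ker_liftQ_eq_bot _ _ _ le_rfl)).injOn).symm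

variable {k : Type*} [Field k]

theorem ker_funLeft_compl_eq_span_basisFun {ι : Type*} [Finite ι] (Q : Set ι) :
    LinearMap.ker (LinearMap.funLeft k k ((↑) : ↥Qᶜ → ι)) =
      span k (Pi.basisFun k ι '' Q) := by
  ext v
  rw [(Pi.basisFun k ι).mem_span_image, LinearMap.mem_ker]
  simp [funext_iff, subset_def, not_imp_comm]

theorem linearIndepOn_iff_restrict_compl {α : Type*} {B : Set α} [Finite B] {f : α → B → k}
    (hf : ∀ b : B, f b = Pi.basisFun k B b) (S : Set α) :
    LinearIndepOn k f S ↔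
      LinearIndepOn k (fun x (j : ↥((↑) ⁻¹' S : Set B)ᶜ) ↦ f x j) (S \ B) := by
  have hfB : f ∘ (↑) = Pi.basisFun k B := funext hf
  have hB : LinearIndepOn k f B := by
    have h := (linearIndepOn_range_iff Subtype.val_injective f).2
      (hfB ▸ (Pi.basisFun k B).linearIndependent)
    rwa [Subtype.range_coe] at h
  have hspan : f '' (S ∩ B) = Pi.basisFun k B '' ((↑) ⁻¹' S) := by
    rw [inter_comm, ← Subtype.image_preimage_coe, ← image_comp, hfB]
  have h := linearIndepOn_union_iff_quotient (R := k) (f := f)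
    (disjoint_sdiff_inter (s := S) (t := B)).symm
  rw [inter_union_sdiff] at h
  rw [h, and_iff_right (hB.mono inter_subset_right), hspan, ← ker_funLeft_compl_eq_span_basisFun,
    linearIndepOn_mkQ_ker_comp_iff]
  rfl

end Coordinates

section ZeroOneVectors

variable {K : Type*} [Field K] {J η : Type*}

namespace ZMod

theorem cast_one_of_two : (ZMod.cast (1 : ZMod 2) : K) = 1 := by
  rw [cast_eq_val, val_one, Nat.cast_one]

theorem eq_zero_or_eq_one_of_two (a : ZMod 2) : a = 0 ∨ a = 1 := by
  revert a; decide

theorem cast_injective_of_two : Function.Injective (ZMod.cast : ZMod 2 → K) := by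
  intro a b h
  rcases a.eq_zero_or_eq_one_of_two with rfl | rfl <;>
    rcases b.eq_zero_or_eq_one_of_two with rfl | rfl <;>
    simp_all [cast_one_of_two]

theorem cast_comp_eq_zero_iff_of_two {w : J → ZMod 2} :
    (ZMod.cast : ZMod 2 → K) ∘ w = 0 ↔ w = 0 :=
  cast_injective_of_two.comp_left.eq_iff' (by ext; simp)

theorem exists_smul_cast_comp_eq_iff_of_two {u w : J → ZMod 2} (hu : u ≠ 0) :
    (∃ c : K, c • (ZMod.cast : ZMod 2 → K) ∘ u = ZMod.cast ∘ w) ↔ w = 0 ∨ w = u := by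
  refine ⟨fun ⟨c, hc⟩ ↦ ?_, ?_⟩
  · obtain ⟨j, hj⟩ := Function.ne_iff.1 hu
    have huj : u j = 1 := (u j).eq_zero_or_eq_one_of_two.resolve_left hj
    -- reading `hc` at a coordinate where `u` is `1` shows that `c` is `0` or `1`
    have hc' : c = ZMod.cast (w j) := by simpa [huj, cast_one_of_two] using congrFun hc j
    rcases (w j).eq_zero_or_eq_one_of_two with hwj | hwj <;> rw [hwj] at hc'
    · rw [hc', cast_zero, zero_smul, eq_comm, cast_comp_eq_zero_iff_of_two] at hc
      exact .inl hc
    · rw [hc', cast_one_of_two, one_smul] at hc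
      exact .inr (cast_injective_of_two.comp_left hc).symm
  · rintro (rfl | rfl)
    · exact ⟨0, by ext; simp⟩
    · exact ⟨1, one_smul _ _⟩

end ZMod

variable {u : η → J → ZMod 2} {t : Set η}

theorem linearIndepOn_cast_comp_iff_of_encard_le_two (ht : t.encard ≤ 2) :
    LinearIndepOn K (fun i ↦ (ZMod.cast : ZMod 2 → K) ∘ u i) t ↔
      (∀ i ∈ t, u i ≠ 0) ∧ InjOn u t := by
  obtain ht | ht := ht.lt_or_eq
  · obtain rfl | ⟨a, rfl⟩ := encard_le_one_iff_eq.1 (Order.le_of_lt_succ ht)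
    · simp
    · simp [ZMod.cast_comp_eq_zero_iff_of_two]
  · obtain ⟨a, b, hab, rfl⟩ := encard_eq_two.1 ht
    by_cases hua : u a = 0
    · refine iff_of_false (fun h ↦ h.ne_zero (mem_insert a _) ?_)
        (fun h ↦ h.1 a (mem_insert a _) hua)
      simp [hua]
    · rw [linearIndepOn_pair_iff _ hab (by simpa [ZMod.cast_comp_eq_zero_iff_of_two] using hua)]
      simp only [forall_mem_insert, mem_singleton_iff, forall_eq, injOn_pair, hab, imp_false]
      simp only [ne_eq, ← not_exists, ZMod.exists_smul_cast_comp_eq_iff_of_two hua]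
      tauto

theorem linearIndepOn_cast_comp_iff_linearIndepOn_of_encard_le_two (ht : t.encard ≤ 2) :
    LinearIndepOn K (fun i ↦ (ZMod.cast : ZMod 2 → K) ∘ u i) t ↔
      LinearIndepOn (ZMod 2) u t := by
  rw [linearIndepOn_cast_comp_iff_of_encard_le_two ht,
    ← linearIndepOn_cast_comp_iff_of_encard_le_two (K := ZMod 2) ht, ZMod.cast_id']
  rfl

end ZeroOneVectors

namespace Matroid

variable {α : Type*} {M : Matroid α} {B : Set α}

theorem IsRep.cast_comp_of_encard_diff_le_two [Finite B] {c : α → B → ZMod 2}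
    (hc : M.IsRep (ZMod 2) c) (hcB : ∀ b : B, c b = Pi.basisFun (ZMod 2) B b) (hB : B ⊆ M.E)
    (h2 : (M.E \ B).encard ≤ 2) (K : Type*) [Field K] :
    M.IsRep K (fun x ↦ (ZMod.cast : ZMod 2 → K) ∘ c x) := by
  classical
  have hcastB (b : B) : (ZMod.cast : ZMod 2 → K) ∘ c b = Pi.basisFun K B b := by
    ext j
    simp only [hcB, Pi.basisFun_apply, Function.comp_apply, Pi.single_apply]
    split_ifs
    exacts [ZMod.cast_one_of_two, ZMod.cast_zero]
  rw [isRep_iff] at hc ⊢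
  refine ⟨fun S hS ↦ ?_, ?_⟩
  · rw [hc.1 S hS, linearIndepOn_iff_restrict_compl hcB, linearIndepOn_iff_restrict_compl hcastB,
      ← linearIndepOn_cast_comp_iff_linearIndepOn_of_encard_le_two (K := K)
        ((encard_le_encard (sdiff_subset_sdiff_left hS)).trans h2)]
    rfl
  · rw [eq_top_iff, ← (Pi.basisFun K B).span_eq]
    exact span_mono (range_subset_iff.2 fun b ↦ ⟨b, hB b.2, hcastB b⟩)

theorem IsRep.representableOver {K : Type} [Field K] {W : Type*} [AddCommGroup W] [Module K W]
    [Module.Finite K W] {c : α → W} (h : M.IsRep K c) : M.RepresentableOver K :=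
  ⟨_, _, _, _, h.comp_linearEquiv (Module.finBasis K W).equivFun⟩

theorem IsBinary.isRegular_of_encard_diff_le_two (hbin : M.IsBinary) (hB : M.IsBase B)
    (hBfin : B.Finite) (h2 : (M.E \ B).encard ≤ 2) : M.IsRegular := by
  intro K _
  obtain ⟨V, _, _, ρ, hρ⟩ := hbin
  have := hBfin.to_subtype
  obtain ⟨c, hc, hcB⟩ := hρ.exists_isRep_basisFun hB
  exact (hc.cast_comp_of_encard_diff_le_two hcB hB.subset_ground h2 K).representableOver

end Matroid

/-- Every finite binary matroid of rank `r` on a ground set with at most `r + 2` elements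
is regular. -/
theorem binary_card_le_rank_add_two_regular {α : Type*} (M : Matroid α) [M.Finite]
    (r : ℕ) (B : Set α) (hB : M.IsBase B) (hBr : B.ncard = r)
    (hcard : M.E.ncard ≤ r + 2) (hbin : M.IsBinary) :
    M.IsRegular := by
  refine hbin.isRegular_of_encard_diff_le_two hB hB.finite ?_
  have hsum := ncard_sdiff_add_ncard_of_subset hB.subset_ground M.ground_finite
  rw [← M.ground_finite.sdiff.cast_ncard_eq]
  norm_cast
  omega
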